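/- For τ ∈ (0,1) and all complex ζ, η and positive integer N, the function S_N(ζ,η) = Σ_{k=0}^{N−1} (τ/2)^k H_k(ζ) H_k(η) / k! satisfies the Christoffel–Darboux-type identity ∂_ζ S_N(ζ,η) = (2τ/(1−τ²))(η − τζ) S_N(ζ,η) + (2/(1−τ²)) (τ/2)^N (τ H_N(ζ) H_{N−1}(η) − H_{N−1}(ζ) H_N(η)) / (N−1)!. -/

import Mathlib

/-!
Comparing the explicit sums term by term gives the three-term recurrence
`H_{k+2} = 2z H_{k+1} - 2(k+1) H_k`, and from it, by induction, `H_k' = 2k H_{k-1}`.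
After multiplying by `1 - τ²`, the identity is proved by induction on `N`: adding the
`k = N` terms to both sides and eliminating `H_{N+1}(ζ)`, `H_{N+1}(η)` with the recurrence
leaves an identity of rational functions.
-/

open Real Finset

/-- The physicists' Hermite polynomial (complex argument)
`H_k(z) = k! Σ_{m=0}^{⌊k/2⌋} (−1)^m (2z)^{k−2m} / (m! (k−2m)!)`. -/
noncomputable def hermiteHC (k : ℕ) (z : ℂ) : ℂ :=
  (Nat.factorial k : ℂ) * ∑ m ∈ Finset.range (k / 2 + 1),
    (-1) ^ m * (2 * z) ^ (k - 2 * m) /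
      ((Nat.factorial m : ℂ) * (Nat.factorial (k - 2 * m) : ℂ))

open scoped Nat

noncomputable def hermiteTerm (k m : ℕ) (z : ℂ) : ℂ :=
  (-1) ^ m * (2 * z) ^ (k - 2 * m) / ((m ! : ℂ) * ((k - 2 * m)! : ℂ))

lemma hermiteHC_eq_sum (k : ℕ) (z : ℂ) :
    hermiteHC k z = k ! * ∑ m ∈ range (k / 2 + 1), hermiteTerm k m z := rfl

lemma hermiteHC_zero (z : ℂ) : hermiteHC 0 z = 1 := by simp [hermiteHC]

lemma hermiteHC_one (z : ℂ) : hermiteHC 1 z = 2 * z := by simp [hermiteHC]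

lemma cast_mul_hermiteTerm_succ {k m : ℕ} (h : 2 * m ≤ k) (z : ℂ) :
    ((k + 1 - 2 * m : ℕ) : ℂ) * hermiteTerm (k + 1) m z = 2 * z * hermiteTerm k m z := by
  rw [hermiteTerm, hermiteTerm, show k + 1 - 2 * m = k - 2 * m + 1 by omega, Nat.factorial_succ]
  have := Nat.cast_add_one_ne_zero (R := ℂ) (k - 2 * m)
  push_cast
  field_simp
  ring

lemma succ_mul_hermiteTerm_add_two (k m : ℕ) (z : ℂ) :
    ((m : ℂ) + 1) * hermiteTerm (k + 2) (m + 1) z = -hermiteTerm k m z := by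
  rw [hermiteTerm, hermiteTerm, show k + 2 - 2 * (m + 1) = k - 2 * m by omega, Nat.factorial_succ]
  push_cast
  field_simp
  ring

lemma sum_cast_sub_mul_hermiteTerm_add_two (k : ℕ) (z : ℂ) :
    ∑ m ∈ range (k / 2 + 2), ((k + 2 - 2 * m : ℕ) : ℂ) * hermiteTerm (k + 2) m z
      = 2 * z * ∑ m ∈ range ((k + 1) / 2 + 1), hermiteTerm (k + 1) m z := by
  -- the extra index `m = k / 2 + 1` (for even `k`) carries the factor `k + 2 - 2 * m = 0`
  rw [← sum_subset (range_subset_range.mpr (by omega : (k + 1) / 2 + 1 ≤ k / 2 + 2))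
    fun m hm hm' => ?_, mul_sum]
  · exact sum_congr rfl fun m hm => cast_mul_hermiteTerm_succ (by simp at hm; omega) z
  · simp only [mem_range] at hm hm'
    simp [show k + 2 - 2 * m = 0 by omega]

lemma sum_two_mul_mul_hermiteTerm_add_two (k : ℕ) (z : ℂ) :
    ∑ m ∈ range (k / 2 + 2), (2 * m : ℂ) * hermiteTerm (k + 2) m z
      = -2 * ∑ m ∈ range (k / 2 + 1), hermiteTerm k m z := by
  rw [sum_range_succ', mul_sum]
  simp only [Nat.cast_add, Nat.cast_one, Nat.cast_zero, mul_zero, zero_mul, add_zero]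
  refine sum_congr rfl fun m _ => ?_
  linear_combination 2 * succ_mul_hermiteTerm_add_two k m z

theorem hermiteHC_add_two (k : ℕ) (z : ℂ) :
    hermiteHC (k + 2) z = 2 * z * hermiteHC (k + 1) z - 2 * (k + 1) * hermiteHC k z := by
  have hsplit : ((k + 2) ! : ℂ) * ∑ m ∈ range (k / 2 + 2), hermiteTerm (k + 2) m z
      = ((k + 1)! : ℂ) * ∑ m ∈ range (k / 2 + 2),
          (((k + 2 - 2 * m : ℕ) : ℂ) * hermiteTerm (k + 2) m z
            + (2 * m : ℂ) * hermiteTerm (k + 2) m z) := by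
    rw [Nat.factorial_succ, Nat.cast_mul, mul_comm ((k + 1 + 1 : ℕ) : ℂ), mul_assoc, mul_sum]
    refine congrArg _ (sum_congr rfl fun m hm => ?_)
    rw [Nat.cast_sub (by simp at hm; omega)]
    push_cast
    ring
  rw [hermiteHC_eq_sum, show (k + 2) / 2 + 1 = k / 2 + 2 by omega, hsplit, sum_add_distrib,
    sum_cast_sub_mul_hermiteTerm_add_two, sum_two_mul_mul_hermiteTerm_add_two, hermiteHC_eq_sum,
    hermiteHC_eq_sum, Nat.factorial_succ]
  push_cast
  ring

theorem hermiteHC_succ (k : ℕ) (z : ℂ) :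
    hermiteHC (k + 1) z = 2 * z * hermiteHC k z - 2 * k * hermiteHC (k - 1) z := by
  cases k with
  | zero => simp [hermiteHC_zero, hermiteHC_one]
  | succ k => simpa using hermiteHC_add_two k z

theorem hasDerivAt_hermiteHC :
    ∀ (k : ℕ) (z : ℂ), HasDerivAt (hermiteHC k) (2 * k * hermiteHC (k - 1) z) z
  | 0, z => by simpa [funext hermiteHC_zero] using hasDerivAt_const z (1 : ℂ)
  | 1, z => by
    simpa [funext hermiteHC_one, hermiteHC_zero] using (hasDerivAt_id z).const_mul (2 : ℂ)
  | k + 2, z => by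
    have hd := (((hasDerivAt_id' z).const_mul (2 : ℂ)).mul (hasDerivAt_hermiteHC (k + 1) z)).sub
      ((hasDerivAt_hermiteHC k z).const_mul (2 * ((k : ℂ) + 1)))
    rw [show hermiteHC (k + 2) = fun x => 2 * x * hermiteHC (k + 1) x - 2 * (k + 1) * hermiteHC k x
      from funext (hermiteHC_add_two k)]
    refine hd.congr_deriv ?_
    rw [show k + 2 - 1 = k + 1 from rfl, hermiteHC_succ k z]
    push_cast
    ring

theorem christoffelDarboux_hermiteHC (τ ζ η : ℂ) (n : ℕ) :
    (1 - τ ^ 2) * ∑ k ∈ range (n + 1),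
        (τ / 2) ^ k * (2 * k * hermiteHC (k - 1) ζ) * hermiteHC k η / (k ! : ℂ)
      = 2 * τ * (η - τ * ζ) *
          ∑ k ∈ range (n + 1), (τ / 2) ^ k * hermiteHC k ζ * hermiteHC k η / (k ! : ℂ)
        + 2 * (τ / 2) ^ (n + 1) *
          (τ * hermiteHC (n + 1) ζ * hermiteHC n η - hermiteHC n ζ * hermiteHC (n + 1) η) /
            (n ! : ℂ) := by
  induction n with
  | zero =>
    simp only [zero_add, sum_range_one, Nat.cast_zero, Nat.factorial_zero, hermiteHC_zero,
      hermiteHC_one]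
    ring
  | succ n ih =>
    rw [sum_range_succ _ (n + 1), mul_add, ih, sum_range_succ _ (n + 1), hermiteHC_add_two n ζ,
      hermiteHC_add_two n η, Nat.factorial_succ]
    have := Nat.cast_add_one_ne_zero (R := ℂ) n
    push_cast
    field_simp
    ring

/-- Christoffel–Darboux-type identity for `S_N(ζ,η) = Σ_{k<N} (τ/2)^k H_k(ζ)H_k(η)/k!`:
`∂_ζ S_N = (2τ/(1−τ²))(η − τζ) S_N
 + (2/(1−τ²)) (τ/2)^N (τ H_N(ζ)H_{N−1}(η) − H_{N−1}(ζ)H_N(η))/(N−1)!`. -/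
theorem stmt_15 (τ : ℝ) (h0 : 0 < τ) (h1 : τ < 1) (N : ℕ) (hN : 1 ≤ N) (ζ η : ℂ) :
    deriv (fun x : ℂ =>
        ∑ k ∈ Finset.range N,
          ((τ : ℂ) / 2) ^ k * hermiteHC k x * hermiteHC k η / (Nat.factorial k : ℂ)) ζ
      = (2 * (τ : ℂ) / (1 - (τ : ℂ) ^ 2)) * (η - (τ : ℂ) * ζ) *
          (∑ k ∈ Finset.range N,
            ((τ : ℂ) / 2) ^ k * hermiteHC k ζ * hermiteHC k η / (Nat.factorial k : ℂ))
        + (2 / (1 - (τ : ℂ) ^ 2)) * ((τ : ℂ) / 2) ^ N *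
          ((τ : ℂ) * hermiteHC N ζ * hermiteHC (N - 1) η
            - hermiteHC (N - 1) ζ * hermiteHC N η) / (Nat.factorial (N - 1) : ℂ) := by
  obtain ⟨n, rfl⟩ := Nat.exists_eq_add_of_le' hN
  have hτ : (1 - (τ : ℂ) ^ 2) ≠ 0 := by
    norm_cast
    nlinarith
  have hderiv := HasDerivAt.fun_sum (u := range (n + 1)) fun k _ =>
    (((hasDerivAt_hermiteHC k ζ).const_mul (((τ : ℂ) / 2) ^ k)).mul_const
      (hermiteHC k η)).div_const (k ! : ℂ)
  rw [hderiv.deriv, Nat.add_sub_cancel, eq_comm, ← mul_right_inj' hτ,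
    christoffelDarboux_hermiteHC]
  field_simp
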